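/- arXiv:1206.5345 — 2 statements merged into one kernel-verified Lean document; each statement's English description precedes it below -/
import Mathlib

section
/- Theorem 1, regret form (LRT achieves bounded regret). Let i ∈ {0,1} be the true demand model and consider a pricing process under model i following the LRT policy. Let r : Fin 2 → Fin 2 → ℝ be expected revenues satisfying r i i ≥ r i k for all k (arm i is optimal under model i). Set a_i = min over k ∈ Fin 2 of I(q i k ‖ q (1−i) k). Then the regret Δ_i(T) = T · r i i − E[Σ_{t=1}^T r i (a_t)] satisfies Δ_i(T) ≤ (1 + (M − m)²/(2 a_i²)) · max over k of (r i i − r i k) for every horizon T ≥ 1; in particular sup over T of Δ_i(T) is finite. -/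
open MeasureTheory ProbabilityTheory Finset Real

noncomputable section

/-- Probability of outcome `y ∈ {0,1}` under a Bernoulli distribution with success
probability `p`:  `f p y = p^y (1-p)^(1-y)`. -/
def bern (p : ℝ) (y : ℕ) : ℝ := p ^ y * (1 - p) ^ (1 - y)

/-- The Kullback–Leibler divergence between Bernoulli(α) and Bernoulli(β). -/
def klBern (α β : ℝ) : ℝ :=
  α * Real.log (α / β) + (1 - α) * Real.log ((1 - α) / (1 - β))

variable {Ω : Type*} {mΩ : MeasurableSpace Ω}

/-- The (unnormalized) log-likelihood statistic
`L t = ∑_{j=1}^t log (f₁^{a_j}(y_j) / f₀^{a_j}(y_j))`, with `L 0 = 0`. -/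
def LLR (q : Fin 2 → Fin 2 → ℝ) (a : ℕ → Ω → Fin 2) (y : ℕ → Ω → ℕ) (t : ℕ) (ω : Ω) : ℝ :=
  ∑ j ∈ Finset.Icc 1 t,
    Real.log (bern (q 1 (a j ω)) (y j ω) / bern (q 0 (a j ω)) (y j ω))

/-- A pricing process under true demand model `i`: actions `a t` are `ℱ (t-1)`-measurable,
outcomes `y t ∈ {0,1}` are `ℱ t`-measurable, and the conditional probability of a successful
sale at time `t` given the past is `q i (a t)` almost surely. -/
structure IsPricingProcess (μ : Measure Ω) (ℱ : Filtration ℕ mΩ)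
    (q : Fin 2 → Fin 2 → ℝ) (i : Fin 2) (a : ℕ → Ω → Fin 2) (y : ℕ → Ω → ℕ) : Prop where
  meas_a : ∀ t, 1 ≤ t → Measurable[ℱ (t - 1)] (a t)
  meas_y : ∀ t, 1 ≤ t → Measurable[ℱ t] (y t)
  y_range : ∀ t, 1 ≤ t → ∀ ω, y t ω = 0 ∨ y t ω = 1
  sale_prob : ∀ t, 1 ≤ t →
    μ[Set.indicator {ω | y t ω = 1} (fun _ => (1 : ℝ)) | ℱ (t - 1)]
      =ᵐ[μ] fun ω => q i (a t ω)

/-- The LRT policy: for `t ≥ 1`, `a (t+1) = 1` if `L t ≥ 0` and `a (t+1) = 0` if `L t < 0`. -/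
def IsLRT (q : Fin 2 → Fin 2 → ℝ) (a : ℕ → Ω → Fin 2) (y : ℕ → Ω → ℕ) : Prop :=
  ∀ t, 1 ≤ t → ∀ ω, a (t + 1) ω = if 0 ≤ LLR q a y t ω then 1 else 0

/-!
Let `Λ_t = ∑_{j ≤ t} log (f i a_j y_j / f (1-i) a_j y_j)` be the log-likelihood ratio of the true
model against the other one (so `Λ_t = ±L_t`) and `Z_t = exp (-s Λ_t)`. Given the past, the
increment of `Λ` has mean `I(q i k ‖ q (1-i) k) ≥ a_i` for the arm `k` being played and range at
most `M - m`, so Hoeffding's lemma with `s = 4 a_i / (M - m)²` gives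
`E[Z_{t+1} | F_t] ≤ e^{-c} Z_t` for `c = 2 a_i² / (M - m)²`, whence `E Z_t ≤ e^{-c t}`.
The LRT plays a suboptimal arm in round `t + 1` only if `Λ_t ≤ 0`, i.e. `Z_t ≥ 1`, so that round
costs at most `max_k (r i i - r i k) · e^{-c t}` in expectation; summing the geometric series,
`1 / (1 - e^{-c}) ≤ 1 + 1 / c`.
-/

open InformationTheory

lemma klBern_eq_klFun {α β : ℝ} (hβ0 : 0 < β) (hβ1 : β < 1) :
    klBern α β = β * klFun (α / β) + (1 - β) * klFun ((1 - α) / (1 - β)) := by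
  have : 1 - β ≠ 0 := by linarith
  simp only [klBern, klFun]
  field_simp
  ring

lemma klBern_pos {α β : ℝ} (hα : α ∈ Set.Icc 0 1) (hβ : β ∈ Set.Ioo 0 1) (hne : α ≠ β) :
    0 < klBern α β := by
  obtain ⟨hβ0, hβ1⟩ := hβ
  rw [klBern_eq_klFun hβ0 hβ1]
  have h1 : 0 < klFun (α / β) := by
    refine (klFun_nonneg (div_nonneg hα.1 hβ0.le)).lt_of_ne' ?_
    rwa [Ne, klFun_eq_zero_iff (div_nonneg hα.1 hβ0.le), div_eq_one_iff_eq hβ0.ne']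
  have h2 : 0 ≤ klFun ((1 - α) / (1 - β)) :=
    klFun_nonneg (div_nonneg (by linarith [hα.2]) (by linarith))
  have : 0 < 1 - β := by linarith
  positivity

lemma two_point_mgf_le {p : ℝ} (hp0 : 0 ≤ p) (hp1 : p ≤ 1) (u v s : ℝ) :
    p * exp (s * v) + (1 - p) * exp (s * u) ≤
      exp (s * (p * v + (1 - p) * u) + s ^ 2 * (v - u) ^ 2 / 8) := by
  set P : unitInterval := ⟨p, hp0, hp1⟩
  have hsupp : ∀ᵐ z ∂Ber(v, u, P), z ∈ Set.Icc (min u v) (max u v) := by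
    rw [ae_iff]
    apply bernoulliMeasure_apply_of_notMem_of_notMem _ (measurableSet_Icc.compl) <;> simp
  have hG := (hasSubgaussianMGF_of_mem_Icc (X := id) aemeasurable_id hsupp).mgf_le s
  have hmean : ∫ z, id z ∂Ber(v, u, P) = p * v + (1 - p) * u := by
    simp [integral_bernoulliMeasure, P]
  rw [hmean, mgf] at hG
  simp only [id, integral_bernoulliMeasure] at hG
  have hc : (((‖max u v - min u v‖₊ / 2) ^ 2 : NNReal) : ℝ) = (v - u) ^ 2 / 4 := by
    push_cast
    rw [max_sub_min_eq_abs, Real.norm_eq_abs, abs_abs, div_pow, sq_abs]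
    ring
  rw [hc] at hG
  set e := p * v + (1 - p) * u
  calc p * exp (s * v) + (1 - p) * exp (s * u)
      = exp (s * e) * (p * exp (s * (v - e)) + (1 - p) * exp (s * (u - e))) := by
        rw [mul_add, mul_left_comm, ← exp_add, mul_left_comm (exp _) (1 - p), ← exp_add]
        ring_nf
    _ ≤ exp (s * e) * exp ((v - u) ^ 2 / 4 * s ^ 2 / 2) := by gcongr; exact hG
    _ = exp (s * e + s ^ 2 * (v - u) ^ 2 / 8) := by rw [← exp_add]; ring_nf

lemma two_point_exp_neg_le {p u v δ D : ℝ} (hp0 : 0 ≤ p) (hp1 : p ≤ 1) (hδ : 0 ≤ δ) (hD : 0 < D)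
    (hmean : δ ≤ p * v + (1 - p) * u) (huv : |v - u| ≤ D) :
    p * exp (-(4 * δ / D ^ 2) * v) + (1 - p) * exp (-(4 * δ / D ^ 2) * u)
      ≤ exp (-(2 * δ ^ 2 / D ^ 2)) := by
  set s := 4 * δ / D ^ 2
  have hs : 0 ≤ s := by positivity
  refine (two_point_mgf_le hp0 hp1 u v (-s)).trans (exp_le_exp.2 ?_)
  have hsq : (v - u) ^ 2 ≤ D ^ 2 := sq_le_sq' (abs_le.1 huv).1 (abs_le.1 huv).2
  calc -s * (p * v + (1 - p) * u) + (-s) ^ 2 * (v - u) ^ 2 / 8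
      ≤ -s * δ + s ^ 2 * D ^ 2 / 8 := by
        rw [neg_sq]
        gcongr ?_ + ?_
        · nlinarith
        · gcongr
    _ = -(2 * δ ^ 2 / D ^ 2) := by
        simp only [s]
        field_simp
        ring

lemma one_div_one_sub_exp_neg_le {c : ℝ} (hc : 0 < c) : 1 / (1 - exp (-c)) ≤ 1 + 1 / c := by
  have hρ : exp (-c) ≤ 1 / (1 + c) := by
    rw [exp_neg, one_div]
    exact inv_anti₀ (by linarith) (by linarith [add_one_le_exp c])
  have h1 : 0 < 1 - 1 / (1 + c) := by
    rw [sub_pos, div_lt_one (by linarith)]; linarith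
  calc 1 / (1 - exp (-c)) ≤ 1 / (1 - 1 / (1 + c)) := by gcongr
    _ = 1 + 1 / c := by field_simp [hc.ne']; ring

def bernLLR (q : Fin 2 → Fin 2 → ℝ) (i k : Fin 2) (n : ℕ) : ℝ :=
  Real.log (bern (q i k) n / bern (q (1 - i) k) n)

section bernLLR

variable {q : Fin 2 → Fin 2 → ℝ}

lemma bernLLR_zero_eq (k : Fin 2) (n : ℕ) :
    bernLLR q 0 k n = -Real.log (bern (q 1 k) n / bern (q 0 k) n) := by
  rw [bernLLR, ← Real.log_inv, inv_div]
  rfl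

lemma sum_bernLLR_one_eq_LLR (a : ℕ → Ω → Fin 2) (y : ℕ → Ω → ℕ) (t : ℕ) (ω : Ω) :
    ∑ j ∈ Icc 1 t, bernLLR q 1 (a j ω) (y j ω) = LLR q a y t ω :=
  rfl

lemma sum_bernLLR_zero_eq_neg_LLR (a : ℕ → Ω → Fin 2) (y : ℕ → Ω → ℕ) (t : ℕ) (ω : Ω) :
    ∑ j ∈ Icc 1 t, bernLLR q 0 (a j ω) (y j ω) = -LLR q a y t ω := by
  simp only [bernLLR_zero_eq, sum_neg_distrib, LLR]

lemma mean_bernLLR_eq_klBern (i k : Fin 2) :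
    q i k * bernLLR q i k 1 + (1 - q i k) * bernLLR q i k 0 = klBern (q i k) (q (1 - i) k) := by
  simp [bernLLR, bern, klBern]

lemma bernLLR_one_ne_bernLLR_zero {i k : Fin 2} (hq : q i k ∈ Set.Ioo 0 1)
    (hq' : q (1 - i) k ∈ Set.Ioo 0 1) (hne : q i k ≠ q (1 - i) k) :
    bernLLR q i k 1 ≠ bernLLR q i k 0 := by
  obtain ⟨h0, h1⟩ := hq
  obtain ⟨h0', h1'⟩ := hq'
  simp only [bernLLR, bern, pow_one, pow_zero, one_mul, mul_one, Nat.sub_self, Nat.sub_zero]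
  intro h
  have := Real.log_injOn_pos (div_pos h0 h0') (div_pos (sub_pos.2 h1) (sub_pos.2 h1')) h
  rw [div_eq_div_iff h0'.ne' (sub_pos.2 h1').ne'] at this
  exact hne (by linarith)

lemma abs_bernLLR_sub_le {m M : ℝ} (i k : Fin 2)
    (h : ∀ n : Fin 2, Real.log (bern (q 1 k) n / bern (q 0 k) n) ∈ Set.Icc m M) :
    |bernLLR q i k 1 - bernLLR q i k 0| ≤ M - m := by
  obtain rfl | rfl : i = 0 ∨ i = 1 := by omega
  · rw [bernLLR_zero_eq, bernLLR_zero_eq, neg_sub_neg, abs_sub_comm]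
    exact Real.dist_le_of_mem_Icc (h 1) (h 0)
  · exact Real.dist_le_of_mem_Icc (h 1) (h 0)

end bernLLR

lemma IsLRT.sum_bernLLR_nonpos {q : Fin 2 → Fin 2 → ℝ} {a : ℕ → Ω → Fin 2} {y : ℕ → Ω → ℕ}
    (hpol : IsLRT q a y) {i : Fin 2} (t : ℕ) {ω : Ω} (hω : a (t + 1) ω ≠ i) :
    ∑ j ∈ Icc 1 t, bernLLR q i (a j ω) (y j ω) ≤ 0 := by
  rcases Nat.eq_zero_or_pos t with rfl | ht
  · simp
  have hchoice := hpol t ht ω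
  obtain rfl | rfl : i = 0 ∨ i = 1 := by omega
  · rw [sum_bernLLR_zero_eq_neg_LLR, neg_nonpos]
    by_contra hL
    exact hω (by simpa [hL] using hchoice)
  · rw [sum_bernLLR_one_eq_LLR]
    by_contra hL
    exact hω (by simpa [(not_le.1 hL).le] using hchoice)

namespace IsPricingProcess

variable {μ : Measure Ω} {ℱ : Filtration ℕ mΩ}
  {q : Fin 2 → Fin 2 → ℝ} {i : Fin 2} {a : ℕ → Ω → Fin 2} {y : ℕ → Ω → ℕ}

lemma measurable_action_succ (hproc : IsPricingProcess μ ℱ q i a y) (t : ℕ) :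
    Measurable[ℱ t] (a (t + 1)) := by
  simpa using hproc.meas_a (t + 1) (Nat.le_add_left 1 t)

lemma measurable_comp_action (hproc : IsPricingProcess μ ℱ q i a y) (F : Fin 2 → ℝ) {t : ℕ}
    (ht : 1 ≤ t) : Measurable fun ω => F (a t ω) :=
  (measurable_of_finite F).comp ((hproc.meas_a t ht).mono (ℱ.le _) le_rfl)

lemma measurable_comp_outcome (hproc : IsPricingProcess μ ℱ q i a y) (h : Fin 2 → ℕ → ℝ)
    {j t : ℕ} (hj : 1 ≤ j) (hjt : j ≤ t) : Measurable[ℱ t] fun ω => h (a j ω) (y j ω) :=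
  (measurable_of_countable fun p : Fin 2 × ℕ => h p.1 p.2).comp
    (((hproc.meas_a j hj).mono (ℱ.mono (j.sub_le 1 |>.trans hjt)) le_rfl).prodMk
      ((hproc.meas_y j hj).mono (ℱ.mono hjt) le_rfl))

lemma norm_comp_outcome_le (hproc : IsPricingProcess μ ℱ q i a y) (h : Fin 2 → ℕ → ℝ)
    {j : ℕ} (hj : 1 ≤ j) (ω : Ω) :
    ‖h (a j ω) (y j ω)‖ ≤ ∑ k, (‖h k 0‖ + ‖h k 1‖) := by
  refine le_trans ?_ (Finset.single_le_sum (fun k _ => by positivity) (mem_univ (a j ω)))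
  rcases hproc.y_range j hj ω with hy | hy <;> rw [hy] <;> simp

lemma integrable_mul_comp_action (hproc : IsPricingProcess μ ℱ q i a y) (F : Fin 2 → ℝ)
    {t : ℕ} (ht : 1 ≤ t) {C : Ω → ℝ} (hC : Integrable C μ) :
    Integrable (fun ω => C ω * F (a t ω)) μ :=
  have ⟨_, hc⟩ := Finite.exists_le fun k => ‖F k‖
  hC.mul_bdd (hproc.measurable_comp_action F ht).aestronglyMeasurable (ae_of_all _ fun _ => hc _)

lemma integrable_comp_action [IsFiniteMeasure μ] (hproc : IsPricingProcess μ ℱ q i a y)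
    (F : Fin 2 → ℝ) {t : ℕ} (ht : 1 ≤ t) : Integrable (fun ω => F (a t ω)) μ :=
  have ⟨_, hc⟩ := Finite.exists_le fun k => ‖F k‖
  .of_bound (hproc.measurable_comp_action F ht).aestronglyMeasurable _ (ae_of_all _ fun _ => hc _)

lemma measurableSet_sale (hproc : IsPricingProcess μ ℱ q i a y) (t : ℕ) :
    MeasurableSet {ω | y (t + 1) ω = 1} :=
  (hproc.meas_y (t + 1) (Nat.le_add_left 1 t)).mono (ℱ.le _) le_rfl (measurableSet_singleton 1)

lemma integrable_mul_indicator_sale (hproc : IsPricingProcess μ ℱ q i a y) (t : ℕ) {G : Ω → ℝ}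
    (hG : Integrable G μ) :
    Integrable (fun ω => G ω * {ω | y (t + 1) ω = 1}.indicator (fun _ => (1 : ℝ)) ω) μ :=
  hG.mul_bdd (measurable_const.indicator (hproc.measurableSet_sale t)).aestronglyMeasurable
    (c := 1) (ae_of_all _ fun ω => (norm_indicator_le_norm_self _ ω).trans norm_one.le)

lemma integral_mul_indicator_sale [IsFiniteMeasure μ] (hproc : IsPricingProcess μ ℱ q i a y)
    (t : ℕ) {G : Ω → ℝ} (hG : StronglyMeasurable[ℱ t] G) (hGi : Integrable G μ) :
    ∫ ω, G ω * {ω | y (t + 1) ω = 1}.indicator (fun _ => (1 : ℝ)) ω ∂μ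
      = ∫ ω, G ω * q i (a (t + 1) ω) ∂μ := by
  have hsale_prob := hproc.sale_prob (t + 1) (Nat.le_add_left 1 t)
  rw [Nat.add_sub_cancel] at hsale_prob
  calc ∫ ω, G ω * {ω | y (t + 1) ω = 1}.indicator (fun _ => (1 : ℝ)) ω ∂μ
      = ∫ ω, μ[G * {ω | y (t + 1) ω = 1}.indicator (fun _ => (1 : ℝ)) | ℱ t] ω ∂μ :=
        (integral_condExp (ℱ.le t)).symm
    _ = ∫ ω, G ω * q i (a (t + 1) ω) ∂μ := by
        refine integral_congr_ae ?_
        filter_upwards [condExp_mul_of_stronglyMeasurable_left hG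
          (hproc.integrable_mul_indicator_sale t hGi)
          ((integrable_const (1 : ℝ)).indicator (hproc.measurableSet_sale t)),
          hsale_prob] with ω h1 h2
        rw [h1, Pi.mul_apply, ← h2]

lemma integral_mul_comp_outcome [IsFiniteMeasure μ] (hproc : IsPricingProcess μ ℱ q i a y)
    (t : ℕ) (h : Fin 2 → ℕ → ℝ) {C : Ω → ℝ} (hC : StronglyMeasurable[ℱ t] C)
    (hCi : Integrable C μ) :
    ∫ ω, C ω * h (a (t + 1) ω) (y (t + 1) ω) ∂μ
      = ∫ ω, C ω * (q i (a (t + 1) ω) * h (a (t + 1) ω) 1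
          + (1 - q i (a (t + 1) ω)) * h (a (t + 1) ω) 0) ∂μ := by
  set b := a (t + 1)
  have hb : 1 ≤ t + 1 := Nat.le_add_left 1 t
  set D : Ω → ℝ := fun ω => C ω * (h (b ω) 1 - h (b ω) 0)
  have hD : StronglyMeasurable[ℱ t] D :=
    hC.mul ((measurable_of_finite fun k => h k 1 - h k 0).comp
      (hproc.measurable_action_succ t)).stronglyMeasurable
  have hDi : Integrable D μ := hproc.integrable_mul_comp_action (fun k => h k 1 - h k 0) hb hCi
  have hdecomp : ∀ ω, C ω * h (b ω) (y (t + 1) ω) = C ω * h (b ω) 0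
      + D ω * {ω | y (t + 1) ω = 1}.indicator (fun _ => (1 : ℝ)) ω := by
    intro ω
    rcases hproc.y_range (t + 1) hb ω with hy | hy
    · simp [D, hy]
    · simp only [D, hy, Set.mem_ofPred_eq, Set.indicator_of_mem, mul_one]
      ring
  have h0i := hproc.integrable_mul_comp_action (fun k => h k 0) hb hCi
  calc ∫ ω, C ω * h (b ω) (y (t + 1) ω) ∂μ
      = ∫ ω, C ω * h (b ω) 0 ∂μ
          + ∫ ω, D ω * {ω | y (t + 1) ω = 1}.indicator (fun _ => (1 : ℝ)) ω ∂μ := by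
        simp only [hdecomp]
        exact integral_add h0i (hproc.integrable_mul_indicator_sale t hDi)
    _ = ∫ ω, C ω * h (b ω) 0 ∂μ + ∫ ω, D ω * q i (b ω) ∂μ := by
        rw [hproc.integral_mul_indicator_sale t hD hDi]
    _ = ∫ ω, C ω * (q i (b ω) * h (b ω) 1 + (1 - q i (b ω)) * h (b ω) 0) ∂μ := by
        rw [← integral_add h0i (hproc.integrable_mul_comp_action (q i) hb hDi)]
        congr 1 with ω
        ring

theorem integral_prod_le_pow [IsProbabilityMeasure μ] (hproc : IsPricingProcess μ ℱ q i a y)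
    {h : Fin 2 → ℕ → ℝ} (hh : ∀ k n, 0 ≤ h k n) {ρ : ℝ} (hρ0 : 0 ≤ ρ)
    (hρ : ∀ k, q i k * h k 1 + (1 - q i k) * h k 0 ≤ ρ) (t : ℕ) :
    Integrable (fun ω => ∏ j ∈ Icc 1 t, h (a j ω) (y j ω)) μ ∧
      ∫ ω, ∏ j ∈ Icc 1 t, h (a j ω) (y j ω) ∂μ ≤ ρ ^ t := by
  induction t with
  | zero => simp
  | succ t ih =>
    set Z : Ω → ℝ := fun ω => ∏ j ∈ Icc 1 t, h (a j ω) (y j ω)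
    have hZ : StronglyMeasurable[ℱ t] Z := Finset.stronglyMeasurable_fun_prod _ fun j hj =>
      (hproc.measurable_comp_outcome h (mem_Icc.1 hj).1 (mem_Icc.1 hj).2).stronglyMeasurable
    have hsplit : (fun ω => ∏ j ∈ Icc 1 (t + 1), h (a j ω) (y j ω))
        = fun ω => Z ω * h (a (t + 1) ω) (y (t + 1) ω) :=
      funext fun ω => prod_Icc_succ_top (Nat.le_add_left 1 t) _
    have hb : 1 ≤ t + 1 := Nat.le_add_left 1 t
    rw [hsplit]
    refine ⟨ih.1.mul_bdd (hproc.measurable_comp_outcome h hb le_rfl |>.mono (ℱ.le _) le_rfl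
      |>.aestronglyMeasurable) (ae_of_all _ (hproc.norm_comp_outcome_le h hb)), ?_⟩
    calc ∫ ω, Z ω * h (a (t + 1) ω) (y (t + 1) ω) ∂μ
        = ∫ ω, Z ω * (q i (a (t + 1) ω) * h (a (t + 1) ω) 1
            + (1 - q i (a (t + 1) ω)) * h (a (t + 1) ω) 0) ∂μ :=
          hproc.integral_mul_comp_outcome t h hZ ih.1
      _ ≤ ∫ ω, Z ω * ρ ∂μ :=
          integral_mono (hproc.integrable_mul_comp_action
            (fun k => q i k * h k 1 + (1 - q i k) * h k 0) hb ih.1) (ih.1.mul_const ρ)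
            fun ω => mul_le_mul_of_nonneg_left (hρ _) (prod_nonneg fun _ _ => hh _ _)
      _ ≤ ρ ^ t * ρ := by
          rw [integral_mul_const]
          exact mul_le_mul_of_nonneg_right ih.2 hρ0
      _ = ρ ^ (t + 1) := (pow_succ ρ t).symm

theorem regret_eq_sum [IsProbabilityMeasure μ] (hproc : IsPricingProcess μ ℱ q i a y)
    (r : Fin 2 → ℝ) (c : ℝ) (T : ℕ) :
    (T : ℝ) * c - ∫ ω, ∑ t ∈ Icc 1 T, r (a t ω) ∂μ
      = ∑ t ∈ range T, ∫ ω, (c - r (a (t + 1) ω)) ∂μ := by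
  have hint : ∀ t, Integrable (fun ω => r (a (t + 1) ω)) μ :=
    fun t => hproc.integrable_comp_action r (Nat.le_add_left 1 t)
  rw [integral_finsetSum _ fun t ht => hproc.integrable_comp_action r (mem_Icc.1 ht).1,
    ← Finset.Ico_add_one_right_eq_Icc, sum_Ico_eq_sum_range]
  simp [integral_sub (integrable_const c) (hint _), add_comm 1]

theorem integral_regret_step_le [IsProbabilityMeasure μ] (hproc : IsPricingProcess μ ℱ q i a y)
    (hpol : IsLRT q a y) {r : Fin 2 → ℝ} {g : ℝ} (hg : ∀ k, r i - r k ≤ g) {s ρ : ℝ}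
    (hs : 0 ≤ s) (hρ0 : 0 ≤ ρ)
    (hρ : ∀ k, q i k * exp (-s * bernLLR q i k 1) + (1 - q i k) * exp (-s * bernLLR q i k 0) ≤ ρ)
    (t : ℕ) : ∫ ω, (r i - r (a (t + 1) ω)) ∂μ ≤ g * ρ ^ t := by
  obtain ⟨hZi, hZ⟩ := hproc.integral_prod_le_pow (h := fun k n => exp (-s * bernLLR q i k n))
    (fun _ _ => (exp_pos _).le) hρ0 hρ t
  have hg0 : 0 ≤ g := by simpa using hg i
  have hpt : ∀ ω, r i - r (a (t + 1) ω)
      ≤ g * ∏ j ∈ Icc 1 t, exp (-s * bernLLR q i (a j ω) (y j ω)) := by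
    intro ω
    rw [← exp_sum, ← mul_sum]
    by_cases hω : a (t + 1) ω = i
    · rw [hω, sub_self]
      positivity
    · have hwrong : 1 ≤ exp (-s * ∑ j ∈ Icc 1 t, bernLLR q i (a j ω) (y j ω)) :=
        one_le_exp (mul_nonneg_of_nonpos_of_nonpos (neg_nonpos.2 hs)
          (hpol.sum_bernLLR_nonpos t hω))
      exact (hg _).trans (le_mul_of_one_le_right hg0 hwrong)
  calc ∫ ω, (r i - r (a (t + 1) ω)) ∂μ
      ≤ ∫ ω, g * ∏ j ∈ Icc 1 t, exp (-s * bernLLR q i (a j ω) (y j ω)) ∂μ :=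
        integral_mono ((integrable_const _).sub (hproc.integrable_comp_action r
          (Nat.le_add_left 1 t))) (hZi.const_mul g) hpt
    _ ≤ g * ρ ^ t := by
        rw [integral_const_mul]
        exact mul_le_mul_of_nonneg_left hZ hg0

theorem regret_le_of_step [IsProbabilityMeasure μ] (hproc : IsPricingProcess μ ℱ q i a y)
    (hpol : IsLRT q a y) {r : Fin 2 → ℝ} {g : ℝ} (hg : ∀ k, r i - r k ≤ g) {s c : ℝ}
    (hs : 0 ≤ s) (hc : 0 < c) (hstep : ∀ k, q i k * exp (-s * bernLLR q i k 1)
      + (1 - q i k) * exp (-s * bernLLR q i k 0) ≤ exp (-c)) (T : ℕ) :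
    (T : ℝ) * r i - ∫ ω, ∑ t ∈ Icc 1 T, r (a t ω) ∂μ ≤ (1 + 1 / c) * g := by
  have hg0 : 0 ≤ g := by simpa using hg i
  have hgeom := geom_sum_Ico_le_of_lt_one (m := 0) (n := T) (exp_pos (-c)).le
    (exp_lt_one_iff.2 (neg_lt_zero.2 hc))
  rw [← range_eq_Ico, pow_zero] at hgeom
  calc (T : ℝ) * r i - ∫ ω, ∑ t ∈ Icc 1 T, r (a t ω) ∂μ
      = ∑ t ∈ range T, ∫ ω, (r i - r (a (t + 1) ω)) ∂μ := hproc.regret_eq_sum r (r i) T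
    _ ≤ ∑ t ∈ range T, g * exp (-c) ^ t := sum_le_sum fun t _ =>
        hproc.integral_regret_step_le hpol hg hs (exp_pos _).le hstep t
    _ ≤ g * (1 + 1 / c) := by
        rw [← mul_sum]
        gcongr
        exact hgeom.trans (one_div_one_sub_exp_neg_le hc)
    _ = (1 + 1 / c) * g := mul_comm _ _

end IsPricingProcess

theorem lrt_bounded_regret_general
    (μ : Measure Ω) [IsProbabilityMeasure μ] (ℱ : Filtration ℕ mΩ)
    (q : Fin 2 → Fin 2 → ℝ)
    (hq : ∀ i k, q i k ∈ Set.Ioo (0 : ℝ) 1)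
    (hni : ∀ k, q 0 k ≠ q 1 k)
    (i : Fin 2) (a : ℕ → Ω → Fin 2) (y : ℕ → Ω → ℕ)
    (hproc : IsPricingProcess μ ℱ q i a y)
    (hpol : IsLRT q a y)
    (r : Fin 2 → Fin 2 → ℝ)
    (ai m M : ℝ)
    (hai : ai = Finset.univ.inf' ⟨0, Finset.mem_univ 0⟩
      (fun k : Fin 2 => klBern (q i k) (q (1 - i) k)))
    (hm : m = Finset.univ.inf' ⟨(0, 0), Finset.mem_univ _⟩
      (fun p : Fin 2 × Fin 2 =>
        Real.log (bern (q 1 p.1) (p.2 : ℕ) / bern (q 0 p.1) (p.2 : ℕ))))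
    (hM : M = Finset.univ.sup' ⟨(0, 0), Finset.mem_univ _⟩
      (fun p : Fin 2 × Fin 2 =>
        Real.log (bern (q 1 p.1) (p.2 : ℕ) / bern (q 0 p.1) (p.2 : ℕ))))
    (Δ : ℕ → ℝ)
    (hΔ : ∀ T, Δ T = (T : ℝ) * r i i - ∫ ω, ∑ t ∈ Finset.Icc 1 T, r i (a t ω) ∂μ) :
    (∀ T : ℕ, 1 ≤ T →
        Δ T ≤ (1 + (M - m) ^ 2 / (2 * ai ^ 2)) *
            Finset.univ.sup' ⟨0, Finset.mem_univ 0⟩ (fun k : Fin 2 => r i i - r i k)) ∧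
      BddAbove (Set.range Δ) := by
  have hgap : ∀ k, r i i - r i k
      ≤ Finset.univ.sup' ⟨0, Finset.mem_univ 0⟩ (fun k : Fin 2 => r i i - r i k) :=
    fun k => le_sup' (fun k : Fin 2 => r i i - r i k) (mem_univ k)
  have hne : ∀ k, q i k ≠ q (1 - i) k := by
    obtain rfl | rfl : i = 0 ∨ i = 1 := by omega
    exacts [hni, fun k => (hni k).symm]
  have hrange : ∀ k (n : Fin 2), Real.log (bern (q 1 k) n / bern (q 0 k) n) ∈ Set.Icc m M :=
    fun k n => ⟨hm ▸ inf'_le _ (mem_univ (k, n)), hM ▸ le_sup' (fun p : Fin 2 × Fin 2 =>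
      Real.log (bern (q 1 p.1) p.2 / bern (q 0 p.1) p.2)) (mem_univ (k, n))⟩
  have hai_le : ∀ k, ai ≤ q i k * bernLLR q i k 1 + (1 - q i k) * bernLLR q i k 0 := fun k =>
    (mean_bernLLR_eq_klBern i k).symm ▸ hai ▸ inf'_le _ (mem_univ k)
  have hai_pos : 0 < ai := hai ▸ (lt_inf'_iff _).2 fun k _ =>
    klBern_pos (Set.Ioo_subset_Icc_self (hq i k)) (hq _ k) (hne k)
  have hspread : 0 < M - m := (abs_pos.2 (sub_ne_zero.2 (bernLLR_one_ne_bernLLR_zero (hq i 0)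
    (hq _ 0) (hne 0)))).trans_le (abs_bernLLR_sub_le i 0 (hrange 0))
  have hbound : ∀ T, Δ T ≤ (1 + (M - m) ^ 2 / (2 * ai ^ 2)) *
      Finset.univ.sup' ⟨0, Finset.mem_univ 0⟩ (fun k : Fin 2 => r i i - r i k) := fun T => by
    rw [hΔ, ← one_div_div (2 * ai ^ 2)]
    exact hproc.regret_le_of_step hpol hgap (by positivity) (by positivity) (fun k =>
      two_point_exp_neg_le (hq i k).1.le (hq i k).2.le hai_pos.le hspread (hai_le k)
        (abs_bernLLR_sub_le i k (hrange k))) T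
  exact ⟨fun T _ => hbound T, ⟨_, Set.forall_mem_range.2 hbound⟩⟩

/-- **Theorem 1, regret form (LRT achieves bounded regret).** If the true demand model is `i`
and arm `i` is optimal under model `i` (`r i i ≥ r i k` for all `k`), then the regret
`Δᵢ(T) = T · r i i − E[∑_{t=1}^T r i (a_t)]` of the LRT policy is at most
`(1 + (M - m)²/(2 aᵢ²)) · max_k (r i i − r i k)` for every horizon `T ≥ 1`; in particular the
regret is bounded uniformly in `T`. -/
theorem lrt_bounded_regret
    (μ : Measure Ω) [IsProbabilityMeasure μ] (ℱ : Filtration ℕ mΩ)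
    (q : Fin 2 → Fin 2 → ℝ)
    (hq : ∀ i k, q i k ∈ Set.Ioo (0 : ℝ) 1)
    (hni : ∀ k, q 0 k ≠ q 1 k)
    (i : Fin 2) (a : ℕ → Ω → Fin 2) (y : ℕ → Ω → ℕ)
    (hproc : IsPricingProcess μ ℱ q i a y)
    (hpol : IsLRT q a y)
    (r : Fin 2 → Fin 2 → ℝ)
    (hr : ∀ k, r i k ≤ r i i)
    (ai m M : ℝ)
    (hai : ai = Finset.univ.inf' ⟨0, Finset.mem_univ 0⟩
      (fun k : Fin 2 => klBern (q i k) (q (1 - i) k)))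
    (hm : m = Finset.univ.inf' ⟨(0, 0), Finset.mem_univ _⟩
      (fun p : Fin 2 × Fin 2 =>
        Real.log (bern (q 1 p.1) (p.2 : ℕ) / bern (q 0 p.1) (p.2 : ℕ))))
    (hM : M = Finset.univ.sup' ⟨(0, 0), Finset.mem_univ _⟩
      (fun p : Fin 2 × Fin 2 =>
        Real.log (bern (q 1 p.1) (p.2 : ℕ) / bern (q 0 p.1) (p.2 : ℕ))))
    (Δ : ℕ → ℝ)
    (hΔ : ∀ T, Δ T = (T : ℝ) * r i i - ∫ ω, ∑ t ∈ Finset.Icc 1 T, r i (a t ω) ∂μ) :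
    (∀ T : ℕ, 1 ≤ T →
        Δ T ≤ (1 + (M - m) ^ 2 / (2 * ai ^ 2)) *
            Finset.univ.sup' ⟨0, Finset.mem_univ 0⟩ (fun k : Fin 2 => r i i - r i k)) ∧
      BddAbove (Set.range Δ) :=
  lrt_bounded_regret_general μ ℱ q hq hni i a y hproc hpol r ai m M hai hm hM Δ hΔ
end
end

section
/- Complete learning of the LRT policy. Let i ∈ {0,1} be the true demand model and consider a pricing process under model i following the LRT policy. Then almost surely the set {t ≥ 1 : a_t ≠ i} is finite; equivalently, with probability one there exists T₀ such that a_t = i for all t ≥ T₀, i.e., the LRT policy eventually settles at the optimal price under the true demand model. -/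
open MeasureTheory ProbabilityTheory Finset Real

noncomputable section

variable {Ω : Type*} {mΩ : MeasurableSpace Ω}

/-!
Let `j ≠ i` be the wrong model and `Λₜ` the log-likelihood of `j` against the true model `i`.
Whatever the actions, `E[exp (Λₜ₊₁ / 2) | ℱₜ] = exp (Λₜ / 2) · BC(q i aₜ₊₁, q j aₜ₊₁)`, where
`BC` is the Bhattacharyya coefficient of two Bernoulli laws; it is `< 1` because the models differ
at every price, so `E exp (Λₜ / 2)` decays geometrically. By Markov's inequality and
Borel–Cantelli, almost surely `Λₜ < 0` for all large `t`, and then the LRT policy plays `i`.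
-/

open Filter

lemma sqrt_mul_lt_add_div_two {u w : ℝ} (hu : 0 ≤ u) (hw : 0 ≤ w) (hne : u ≠ w) :
    √(u * w) < (u + w) / 2 := by
  lift u to NNReal using hu
  lift w to NNReal using hw
  simpa only [Real.coe_sqrt, NNReal.coe_mul, NNReal.coe_div, NNReal.coe_add, NNReal.coe_ofNat] using
    NNReal.coe_lt_coe.mpr (NNReal.sqrt_mul_lt_half_add_of_ne (by exact_mod_cast hne))

lemma mul_exp_half_log_div {u w : ℝ} (hu : 0 < u) (hw : 0 < w) :
    u * exp (log (w / u) / 2) = √(u * w) := by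
  rw [div_eq_mul_one_div (log _), ← Real.rpow_def_of_pos (by positivity), ← Real.sqrt_eq_rpow,
    ← Real.sqrt_sq hu.le, ← Real.sqrt_mul (sq_nonneg u), Real.sqrt_sq hu.le]
  congr 1
  field_simp

@[simp] lemma bern_zero (p : ℝ) : bern p 0 = 1 - p := by simp [bern]

@[simp] lemma bern_one (p : ℝ) : bern p 1 = p := by simp [bern]

lemma bern_pos {p : ℝ} (hp : p ∈ Set.Ioo 0 1) (b : ℕ) : 0 < bern p b :=
  mul_pos (pow_pos hp.1 b) (pow_pos (sub_pos.mpr hp.2) _)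

def bhattacharyya (p r : ℝ) : ℝ := √(p * r) + √((1 - p) * (1 - r))

lemma bhattacharyya_nonneg (p r : ℝ) : 0 ≤ bhattacharyya p r := by
  unfold bhattacharyya
  positivity

lemma bhattacharyya_lt_one {p r : ℝ} (hp : p ∈ Set.Icc 0 1) (hr : r ∈ Set.Icc 0 1)
    (hne : p ≠ r) : bhattacharyya p r < 1 := by
  have h₁ := sqrt_mul_lt_add_div_two hp.1 hr.1 hne
  have h₂ := sqrt_mul_lt_add_div_two (sub_nonneg.mpr hp.2) (sub_nonneg.mpr hr.2)
    (fun h => hne (by linarith))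
  unfold bhattacharyya
  linarith

lemma bern_average_exp_half_log_ratio {p r : ℝ} (hp : p ∈ Set.Ioo 0 1)
    (hr : r ∈ Set.Ioo 0 1) :
    (1 - p) * exp (log (bern r 0 / bern p 0) / 2) + p * exp (log (bern r 1 / bern p 1) / 2)
      = bhattacharyya p r := by
  have h₀ := mul_exp_half_log_div (bern_pos hp 0) (bern_pos hr 0)
  have h₁ := mul_exp_half_log_div (bern_pos hp 1) (bern_pos hr 1)
  simp only [bern_zero, bern_one] at h₀ h₁ ⊢
  rw [h₀, h₁, bhattacharyya, add_comm]

lemma integral_mul_eq_of_condExp_eq {m m₀ : MeasurableSpace Ω} {μ : Measure Ω} (hm : m ≤ m₀)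
    [SigmaFinite (μ.trim hm)] {W Y P : Ω → ℝ} (hW : StronglyMeasurable[m] W)
    (hWY : Integrable (W * Y) μ) (hY : Integrable Y μ) (hP : μ[Y | m] =ᵐ[μ] P) :
    ∫ ω, W ω * Y ω ∂μ = ∫ ω, W ω * P ω ∂μ :=
  calc ∫ ω, W ω * Y ω ∂μ = ∫ ω, μ[W * Y | m] ω ∂μ := (integral_condExp hm).symm
    _ = ∫ ω, W ω * μ[Y | m] ω ∂μ :=
      integral_congr_ae (condExp_mul_of_stronglyMeasurable_left hW hWY hY)
    _ = ∫ ω, W ω * P ω ∂μ := integral_congr_ae (hP.mono fun ω hω => by simp only [hω])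

lemma ae_eventually_lt_one_of_summable_integral {μ : Measure Ω} {Z : ℕ → Ω → ℝ}
    (hZ : ∀ t, 0 ≤ᵐ[μ] Z t) (hint : ∀ t, Integrable (Z t) μ)
    (hsum : Summable fun t => ∫ ω, Z t ω ∂μ) :
    ∀ᵐ ω ∂μ, ∀ᶠ t in atTop, Z t ω < 1 := by
  have hmarkov : ∀ t, μ {ω | 1 ≤ Z t ω} ≤ ENNReal.ofReal (∫ ω, Z t ω ∂μ) := fun t => by
    rw [ofReal_integral_eq_lintegral_ofReal (hint t) (hZ t)]
    simpa only [one_mul, ENNReal.one_le_ofReal] using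
      mul_meas_ge_le_lintegral₀ (hint t).1.aemeasurable.ennreal_ofReal 1
  have hfinite : ∑' t, μ {ω | 1 ≤ Z t ω} ≠ ⊤ := by
    refine ne_top_of_le_ne_top ?_ (ENNReal.tsum_le_tsum hmarkov)
    rw [← ENNReal.ofReal_tsum_of_nonneg (fun t => integral_nonneg_of_ae (hZ t)) hsum]
    exact ENNReal.ofReal_ne_top
  filter_upwards [measure_eq_zero_iff_ae_notMem.mp
    (measure_setOfPred_frequently_eq_zero hfinite)] with ω hω
  simpa only [Set.mem_ofPred_eq, not_frequently, not_le] using hω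

def logLikRatio (q : Fin 2 → Fin 2 → ℝ) (i j : Fin 2) (a : ℕ → Ω → Fin 2) (y : ℕ → Ω → ℕ)
    (t : ℕ) (ω : Ω) : ℝ :=
  ∑ s ∈ Icc 1 t, log (bern (q j (a s ω)) (y s ω) / bern (q i (a s ω)) (y s ω))

section LogLikelihood

variable {q : Fin 2 → Fin 2 → ℝ} {a : ℕ → Ω → Fin 2} {y : ℕ → Ω → ℕ}

lemma LLR_eq_logLikRatio : LLR q a y = logLikRatio q 0 1 a y := rfl

lemma logLikRatio_swap (i j : Fin 2) (t : ℕ) (ω : Ω) :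
    logLikRatio q j i a y t ω = -logLikRatio q i j a y t ω := by
  simp only [logLikRatio, ← Finset.sum_neg_distrib, ← Real.log_inv, inv_div]

lemma logLikRatio_succ (i j : Fin 2) (t : ℕ) (ω : Ω) :
    logLikRatio q i j a y (t + 1) ω = logLikRatio q i j a y t ω
      + log (bern (q j (a (t + 1) ω)) (y (t + 1) ω) / bern (q i (a (t + 1) ω)) (y (t + 1) ω)) :=
  Finset.sum_Icc_succ_top (Nat.le_add_left 1 t) _

lemma IsLRT.eq_of_logLikRatio_neg (hpol : IsLRT q a y) {i j : Fin 2} (hij : i ≠ j) {t : ℕ}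
    (ht : 1 ≤ t) {ω : Ω} (hneg : logLikRatio q i j a y t ω < 0) : a (t + 1) ω = i := by
  rw [hpol t ht ω, LLR_eq_logLikRatio]
  obtain ⟨rfl, rfl⟩ | ⟨rfl, rfl⟩ : i = 0 ∧ j = 1 ∨ i = 1 ∧ j = 0 := by omega
  · simp [hneg]
  · rw [logLikRatio_swap] at hneg
    simp [(neg_neg_iff_pos.mp hneg).le]

end LogLikelihood

namespace IsPricingProcess

variable {μ : Measure Ω} {ℱ : Filtration ℕ mΩ} {q : Fin 2 → Fin 2 → ℝ} {i : Fin 2}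
  {a : ℕ → Ω → Fin 2} {y : ℕ → Ω → ℕ}

lemma measurable_comp (hproc : IsPricingProcess μ ℱ q i a y) (g : Fin 2 → ℕ → ℝ) {s t : ℕ}
    (hs : 1 ≤ s) (hst : s ≤ t) : Measurable[ℱ t] fun ω => g (a s ω) (y s ω) :=
  (measurable_of_countable (Function.uncurry g)).comp
    (((hproc.meas_a s hs).mono (ℱ.mono (by omega)) le_rfl).prodMk
      ((hproc.meas_y s hs).mono (ℱ.mono hst) le_rfl))

lemma measurable_logLikRatio (hproc : IsPricingProcess μ ℱ q i a y) (i' j : Fin 2) (t : ℕ) :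
    Measurable[ℱ t] (logLikRatio q i' j a y t) :=
  Finset.measurable_sum _ fun _ hs =>
    hproc.measurable_comp (fun k b => log (bern (q j k) b / bern (q i' k) b))
      (Finset.mem_Icc.mp hs).1 (Finset.mem_Icc.mp hs).2

lemma comp_eq_add_mul_indicator (hproc : IsPricingProcess μ ℱ q i a y) (g : Fin 2 → ℕ → ℝ)
    {t : ℕ} (ht : 1 ≤ t) (ω : Ω) :
    g (a t ω) (y t ω) = g (a t ω) 0
      + (g (a t ω) 1 - g (a t ω) 0) * Set.indicator {ω | y t ω = 1} (fun _ => (1 : ℝ)) ω := by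
  rcases hproc.y_range t ht ω with h | h <;> simp [h]

lemma integrable_mul_comp (hproc : IsPricingProcess μ ℱ q i a y) {W : Ω → ℝ}
    (hW : Integrable W μ) (g : Fin 2 → ℕ → ℝ) (t : ℕ) :
    Integrable (fun ω => W ω * g (a (t + 1) ω) (y (t + 1) ω)) μ := by
  have hgm := (hproc.measurable_comp g (Nat.le_add_left 1 t) le_rfl).mono (ℱ.le _) le_rfl
  refine hW.mul_bdd (c := ∑ k, (|g k 0| + |g k 1|)) hgm.aestronglyMeasurable
    (ae_of_all _ fun ω => ?_)
  have hk := Finset.single_le_sum (f := fun k => |g k 0| + |g k 1|) (fun k _ => by positivity)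
    (Finset.mem_univ (a (t + 1) ω))
  rcases hproc.y_range (t + 1) (Nat.le_add_left 1 t) ω with h | h <;> rw [h, Real.norm_eq_abs] <;>
    linarith [abs_nonneg (g (a (t + 1) ω) 0), abs_nonneg (g (a (t + 1) ω) 1)]

lemma integral_mul_comp (hproc : IsPricingProcess μ ℱ q i a y) [IsFiniteMeasure μ] {t : ℕ}
    {W : Ω → ℝ} (hWm : Measurable[ℱ t] W) (hW : Integrable W μ) (g : Fin 2 → ℕ → ℝ) :
    ∫ ω, W ω * g (a (t + 1) ω) (y (t + 1) ω) ∂μ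
      = ∫ ω, W ω * ((1 - q i (a (t + 1) ω)) * g (a (t + 1) ω) 0
          + q i (a (t + 1) ω) * g (a (t + 1) ω) 1) ∂μ := by
  have ht : 1 ≤ t + 1 := Nat.le_add_left 1 t
  set ind := Set.indicator {ω | y (t + 1) ω = 1} (fun _ => (1 : ℝ))
  set V := fun ω => W ω * (g (a (t + 1) ω) 1 - g (a (t + 1) ω) 0)
  have hVm : Measurable[ℱ t] V :=
    hWm.mul ((measurable_of_countable fun k => g k 1 - g k 0).comp (hproc.meas_a _ ht))
  have hV : Integrable V μ := hproc.integrable_mul_comp hW (fun k _ => g k 1 - g k 0) t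
  have hindm : Measurable ind :=
    measurable_const.indicator ((ℱ.le _) _ (hproc.meas_y _ ht (measurableSet_singleton 1)))
  have hind : Integrable ind μ := (integrable_const 1).mono' hindm.aestronglyMeasurable
    (ae_of_all _ fun ω => by simp only [ind, Set.indicator]; split_ifs <;> simp)
  have hVind : Integrable (V * ind) μ := hV.mul_bdd hindm.aestronglyMeasurable
    (c := 1) (ae_of_all _ fun ω => by simp only [ind, Set.indicator]; split_ifs <;> simp)
  have hsale : ∫ ω, V ω * ind ω ∂μ = ∫ ω, V ω * q i (a (t + 1) ω) ∂μ :=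
    integral_mul_eq_of_condExp_eq (ℱ.le t) hVm.stronglyMeasurable hVind hind (hproc.sale_prob _ ht)
  have hW₀ := hproc.integrable_mul_comp hW (fun k _ => g k 0) t
  calc ∫ ω, W ω * g (a (t + 1) ω) (y (t + 1) ω) ∂μ
      = ∫ ω, W ω * g (a (t + 1) ω) 0 + V ω * ind ω ∂μ := by
        congr 1 with ω
        rw [hproc.comp_eq_add_mul_indicator g ht ω]
        ring
    _ = ∫ ω, W ω * g (a (t + 1) ω) 0 + V ω * q i (a (t + 1) ω) ∂μ := by
        rw [integral_add hW₀ (g := fun ω => V ω * ind ω) hVind, integral_add hW₀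
          (hproc.integrable_mul_comp hV (fun k _ => q i k) t), hsale]
    _ = _ := by
        congr 1 with ω
        ring

lemma integral_exp_half_logLikRatio_succ_le (hproc : IsPricingProcess μ ℱ q i a y)
    [IsFiniteMeasure μ] {j : Fin 2} (hqi : ∀ k, q i k ∈ Set.Ioo 0 1)
    (hqj : ∀ k, q j k ∈ Set.Ioo 0 1) {ρ : ℝ} (hρ : ∀ k, bhattacharyya (q i k) (q j k) ≤ ρ)
    {t : ℕ} (hint : Integrable (fun ω => exp (logLikRatio q i j a y t ω / 2)) μ) :
    Integrable (fun ω => exp (logLikRatio q i j a y (t + 1) ω / 2)) μ ∧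
      ∫ ω, exp (logLikRatio q i j a y (t + 1) ω / 2) ∂μ
        ≤ ρ * ∫ ω, exp (logLikRatio q i j a y t ω / 2) ∂μ := by
  let g : Fin 2 → ℕ → ℝ := fun k b => exp (log (bern (q j k) b / bern (q i k) b) / 2)
  have hsucc : (fun ω => exp (logLikRatio q i j a y (t + 1) ω / 2))
      = fun ω => exp (logLikRatio q i j a y t ω / 2) * g (a (t + 1) ω) (y (t + 1) ω) :=
    funext fun ω => by rw [logLikRatio_succ, add_div, exp_add]
  have hXm : Measurable[ℱ t] fun ω => exp (logLikRatio q i j a y t ω / 2) :=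
    ((hproc.measurable_logLikRatio i j t).div_const 2).exp
  have hbc : ∀ k, (1 - q i k) * g k 0 + q i k * g k 1 = bhattacharyya (q i k) (q j k) :=
    fun k => bern_average_exp_half_log_ratio (hqi k) (hqj k)
  refine ⟨hsucc ▸ hproc.integrable_mul_comp hint g t, ?_⟩
  rw [hsucc, hproc.integral_mul_comp hXm hint g, ← integral_const_mul]
  simp only [hbc]
  refine integral_mono_of_nonneg (ae_of_all _ fun ω => ?_) (hint.const_mul ρ)
    (ae_of_all _ fun ω => ?_)
  · exact mul_nonneg (exp_pos _).le (bhattacharyya_nonneg _ _)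
  · exact (mul_le_mul_of_nonneg_left (hρ _) (exp_pos _).le).trans_eq (mul_comm _ _)

lemma integral_exp_half_logLikRatio_le (hproc : IsPricingProcess μ ℱ q i a y)
    [IsFiniteMeasure μ] {j : Fin 2} (hqi : ∀ k, q i k ∈ Set.Ioo 0 1)
    (hqj : ∀ k, q j k ∈ Set.Ioo 0 1) {ρ : ℝ} (hρ : ∀ k, bhattacharyya (q i k) (q j k) ≤ ρ)
    (t : ℕ) :
    Integrable (fun ω => exp (logLikRatio q i j a y t ω / 2)) μ ∧
      ∫ ω, exp (logLikRatio q i j a y t ω / 2) ∂μ ≤ ρ ^ t * μ.real Set.univ := by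
  induction t with
  | zero => simp [logLikRatio]
  | succ t ih =>
    obtain ⟨hint, hle⟩ := hproc.integral_exp_half_logLikRatio_succ_le hqi hqj hρ ih.1
    refine ⟨hint, hle.trans ?_⟩
    calc ρ * ∫ ω, exp (logLikRatio q i j a y t ω / 2) ∂μ ≤ ρ * (ρ ^ t * μ.real Set.univ) :=
          mul_le_mul_of_nonneg_left ih.2 ((bhattacharyya_nonneg _ _).trans (hρ 0))
      _ = ρ ^ (t + 1) * μ.real Set.univ := by ring

theorem ae_eventually_logLikRatio_neg (hproc : IsPricingProcess μ ℱ q i a y)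
    [IsFiniteMeasure μ] {j : Fin 2} (hqi : ∀ k, q i k ∈ Set.Ioo 0 1)
    (hqj : ∀ k, q j k ∈ Set.Ioo 0 1) (hne : ∀ k, q i k ≠ q j k) :
    ∀ᵐ ω ∂μ, ∀ᶠ t in atTop, logLikRatio q i j a y t ω < 0 := by
  obtain ⟨k₀, hk₀⟩ := Finite.exists_max fun k => bhattacharyya (q i k) (q j k)
  have hρ : bhattacharyya (q i k₀) (q j k₀) < 1 :=
    bhattacharyya_lt_one (Set.Ioo_subset_Icc_self (hqi k₀)) (Set.Ioo_subset_Icc_self (hqj k₀))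
      (hne k₀)
  have hX := hproc.integral_exp_half_logLikRatio_le hqi hqj hk₀
  have hsum : Summable fun t => ∫ ω, exp (logLikRatio q i j a y t ω / 2) ∂μ :=
    .of_nonneg_of_le (fun t => integral_nonneg fun ω => (exp_pos _).le) (fun t => (hX t).2)
      ((summable_geometric_of_lt_one (bhattacharyya_nonneg _ _) hρ).mul_right _)
  filter_upwards [ae_eventually_lt_one_of_summable_integral
    (fun t => ae_of_all _ fun ω => (exp_pos _).le) (fun t => (hX t).1) hsum] with ω hω
  filter_upwards [hω] with t ht
  linarith [exp_lt_one_iff.mp ht]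

end IsPricingProcess

/-- **Complete learning of the LRT policy.** If the true demand model is `i`, then almost
surely the set `{t ≥ 1 : a_t ≠ i}` is finite; equivalently, with probability one there exists
`T₀` such that `a_t = i` for all `t ≥ T₀`, i.e., the LRT policy eventually settles at the
optimal price under the true demand model. -/
theorem lrt_complete_learning
    (μ : Measure Ω) [IsProbabilityMeasure μ] (ℱ : Filtration ℕ mΩ)
    (q : Fin 2 → Fin 2 → ℝ)
    (hq : ∀ i k, q i k ∈ Set.Ioo (0 : ℝ) 1)
    (hni : ∀ k, q 0 k ≠ q 1 k)
    (i : Fin 2) (a : ℕ → Ω → Fin 2) (y : ℕ → Ω → ℕ)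
    (hproc : IsPricingProcess μ ℱ q i a y)
    (hpol : IsLRT q a y) :
    ∀ᵐ ω ∂μ, {t : ℕ | 1 ≤ t ∧ a t ω ≠ i}.Finite ∧ ∃ T₀, ∀ t, T₀ ≤ t → a t ω = i := by
  obtain ⟨j, hij, hqij⟩ : ∃ j, i ≠ j ∧ ∀ k, q i k ≠ q j k := by
    fin_cases i
    exacts [⟨1, by decide, hni⟩, ⟨0, by decide, fun k => (hni k).symm⟩]
  filter_upwards [hproc.ae_eventually_logLikRatio_neg (hq i) (hq j) hqij] with ω hω
  have hsettled : ∀ᶠ t in atTop, a t ω = i := by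
    obtain ⟨T, hT⟩ := eventually_atTop.mp hω
    refine eventually_atTop.mpr ⟨T + 2, fun t ht => ?_⟩
    obtain ⟨s, rfl⟩ : ∃ s, t = s + 1 := ⟨t - 1, by omega⟩
    exact hpol.eq_of_logLikRatio_neg hij (by omega) (hT s (by omega))
  refine ⟨?_, eventually_atTop.mp hsettled⟩
  rw [← Nat.cofinite_eq_atTop, eventually_cofinite] at hsettled
  exact hsettled.subset fun t ht => ht.2
end
end
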